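/- arXiv:1810.05127 — 2 statements merged into one kernel-verified Lean document; each statement's English description precedes it below -/
import Mathlib

section
/- Let 𝒲 be the set of 2×2 real matrices A such that (a) A + iI is invertible, (b) i is not an eigenvalue of A, and (c) A has no purely imaginary (complex) eigenvalue of modulus ≥ 1. For A ∈ 𝒲 and a fixed r > 0, let M(A) := {(A+iI)u : u ∈ ℝ²} ⊂ ℂ² and S(A) := (ℝ² ∪ M(A)) ∩ closure(B(0,r)). Then the set of matrices A ∈ 𝒲 such that S(A) is not Lagrangian with respect to any Kähler form on ℂ² contains a nonempty subset which is open in the space of 2×2 real matrices; in fact, the set {A = [[x,y],[z,w]] ∈ 𝒲 : x ≠ w and x² + w² − 2xw + 2yz < 0} is such a nonempty open subset. -/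
/-!
At the origin a Kähler form gives an alternating form `B`, invariant under `i`, whose Hermitian
metric is `g u v = B u (i • v)`. If `B` vanishes on `ℝ²`, then for real `u, v`
`B ((A + i)u) ((A + i)v) = g (A u) v - g u (A v)`, so `M(A)` is Lagrangian only if `A` is
self-adjoint for the positive definite form `g`, and then `A` has real eigenvalues:
`(x - w)² + 4yz ≥ 0`. The condition `(x - w)² + 2yz < 0` rules this out. Membership in `𝒲` is
the open condition `trace A ≠ 0 ∨ det A < 1`.
-/

set_option linter.unusedVariables false


open Complex Metric Set MvPolynomial
open scoped Manifold

noncomputable section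

/-- The standard real plane `ℝ² ⊆ ℂ²`. -/
def realPlane : Set (EuclideanSpace ℂ (Fin 2)) := {z | ∀ j, (z j).im = 0}

/-- `M(A) = (A + iI)ℝ² ⊆ ℂ²`. -/
def MA (A : Matrix (Fin 2) (Fin 2) ℝ) : Set (EuclideanSpace ℂ (Fin 2)) :=
  {z | ∃ u : Fin 2 → ℝ, ∀ j, z j = ((∑ k, A j k * u k : ℝ) : ℂ) + (u j : ℂ) * Complex.I}

/-- A Kähler form on `ℂ²`: a smooth family of alternating real-bilinear forms which is
closed, of bidegree `(1,1)`, and positive definite. -/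
def IsKahler (ω : EuclideanSpace ℂ (Fin 2) → (EuclideanSpace ℂ (Fin 2) →L[ℝ] EuclideanSpace ℂ (Fin 2) →L[ℝ] ℝ)) : Prop :=
  ContDiff ℝ (⊤ : ℕ∞) ω ∧
  (∀ p u v, ω p u v = - ω p v u) ∧
  (∀ p u v w, fderiv ℝ ω p u v w - fderiv ℝ ω p v u w + fderiv ℝ ω p w u v = 0) ∧
  (∀ p u v, ω p (Complex.I • u) (Complex.I • v) = ω p u v) ∧
  (∀ p w, w ≠ 0 → 0 < ω p w (Complex.I • w))

/-- `S(A) = (ℝ² ∪ M(A)) ∩ closedBall 0 r` is Lagrangian with respect to `ω`: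
`ω` vanishes on the tangent spaces of both branches. -/
def IsLagrangianSA (r : ℝ) (A : Matrix (Fin 2) (Fin 2) ℝ)
    (ω : EuclideanSpace ℂ (Fin 2) → (EuclideanSpace ℂ (Fin 2) →L[ℝ] EuclideanSpace ℂ (Fin 2) →L[ℝ] ℝ)) : Prop :=
  (∀ p ∈ realPlane ∩ Metric.closedBall 0 r, ∀ u ∈ realPlane, ∀ v ∈ realPlane, ω p u v = 0) ∧
  (∀ p ∈ MA A ∩ Metric.closedBall 0 r, ∀ u ∈ MA A, ∀ v ∈ MA A, ω p u v = 0)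

/-- The set `𝒲` of 2×2 real matrices: `A + iI` invertible, `i` not an eigenvalue, and no
purely imaginary eigenvalue of modulus `≥ 1`. -/
def Wset : Set (Matrix (Fin 2) (Fin 2) ℝ) :=
  {A | (A.map (fun x : ℝ => (x : ℂ)) + Complex.I • 1).det ≠ 0 ∧
       (A.map (fun x : ℝ => (x : ℂ)) - Complex.I • 1).det ≠ 0 ∧
       ∀ μ : ℂ, μ.re = 0 → 1 ≤ ‖μ‖ →
         (A.map (fun x : ℝ => (x : ℂ)) - μ • 1).det ≠ 0}

/-- `hsa` says that `[[x, y], [z, w]]` is self-adjoint for the form with Gram matrix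
`[[a, b], [b, c]]`, which `hdet` makes definite. -/
lemma discrim_nonneg_of_selfAdjoint {a b c x y z w : ℝ} (hdet : b ^ 2 < a * c)
    (hsa : x * b + z * c = y * a + w * b) : 0 ≤ (x - w) ^ 2 + 4 * y * z := by
  have hac : 0 < a * c := by nlinarith [sq_nonneg b]
  have key : (y * a + z * c) ^ 2 ≤ a * c * ((x - w) ^ 2 + 4 * y * z) := by
    have hyz : y * a - z * c = (x - w) * b := by linarith
    calc (y * a + z * c) ^ 2 = ((x - w) * b) ^ 2 + 4 * y * z * (a * c) := by rw [← hyz]; ring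
      _ ≤ (x - w) ^ 2 * (a * c) + 4 * y * z * (a * c) := by
        rw [mul_pow]; gcongr
      _ = a * c * ((x - w) ^ 2 + 4 * y * z) := by ring
  exact nonneg_of_mul_nonneg_right (by nlinarith [sq_nonneg (y * a + z * c)]) hac

section KahlerForm

variable {E : Type*} [AddCommGroup E] [Module ℂ E] [Module ℝ E] {B : LinearMap.BilinForm ℝ E}

lemma apply_I_smul_left (hJ : ∀ u v, B (Complex.I • u) (Complex.I • v) = B u v) (u v : E) :
    B (Complex.I • u) v = -B u (Complex.I • v) := by
  have h := hJ u (Complex.I • v)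
  rw [smul_smul, Complex.I_mul_I, neg_one_smul, map_neg] at h
  linarith

lemma apply_I_smul_comm (hanti : ∀ u v, B u v = -B v u)
    (hJ : ∀ u v, B (Complex.I • u) (Complex.I • v) = B u v) (u v : E) :
    B u (Complex.I • v) = B v (Complex.I • u) := by
  rw [hanti, apply_I_smul_left hJ, neg_neg]

lemma discrim_nonneg_of_isotropic_planes [IsScalarTower ℝ ℂ E] (hanti : ∀ u v, B u v = -B v u)
    (hJ : ∀ u v, B (Complex.I • u) (Complex.I • v) = B u v)
    (hpos : ∀ u, u ≠ 0 → 0 < B u (Complex.I • u))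
    {e₀ e₁ : E} (hind : LinearIndependent ℝ ![e₀, e₁]) (he : B e₀ e₁ = 0) {x y z w : ℝ}
    (hM : B (x • e₀ + z • e₁ + Complex.I • e₀) (y • e₀ + w • e₁ + Complex.I • e₁) = 0) :
    0 ≤ (x - w) ^ 2 + 4 * y * z := by
  have hne₁ : e₁ ≠ 0 := hind.ne_zero 1
  set a := B e₀ (Complex.I • e₀)
  set b := B e₀ (Complex.I • e₁)
  set c := B e₁ (Complex.I • e₁)
  have hba : B e₁ (Complex.I • e₀) = b := apply_I_smul_comm hanti hJ _ _
  have hc : 0 < c := hpos e₁ hne₁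
  have hdet : b ^ 2 < a * c := by
    have hv : c • e₀ + (-b) • e₁ ≠ 0 := fun h =>
      hc.ne' (LinearIndependent.pair_iff.mp hind _ _ h).1
    have := hpos _ hv
    simp only [smul_add, smul_comm Complex.I (_ : ℝ), map_add, map_smul, LinearMap.add_apply,
      LinearMap.smul_apply, smul_eq_mul, hba] at this
    nlinarith
  have hsa : x * b + z * c = y * a + w * b := by
    have h00 : B e₀ e₀ = 0 := by linarith [hanti e₀ e₀]
    have h11 : B e₁ e₁ = 0 := by linarith [hanti e₁ e₁]
    have h10 : B e₁ e₀ = 0 := by linarith [hanti e₁ e₀]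
    simp only [map_add, map_smul, LinearMap.add_apply, LinearMap.smul_apply, smul_eq_mul,
      hJ] at hM
    simp only [apply_I_smul_left hJ, he, h00, h11, h10] at hM
    linarith
  exact discrim_nonneg_of_selfAdjoint hdet hsa

end KahlerForm

lemma det_map_sub_smul_one (A : Matrix (Fin 2) (Fin 2) ℝ) (μ : ℂ) :
    (A.map (fun x : ℝ => (x : ℂ)) - μ • 1).det = μ ^ 2 - A.trace * μ + A.det := by
  simp [Matrix.det_fin_two, Matrix.trace_fin_two]
  ring

lemma det_map_sub_smul_one_eq_zero_iff (A : Matrix (Fin 2) (Fin 2) ℝ) (t : ℝ) :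
    (A.map (fun x : ℝ => (x : ℂ)) - ((t : ℂ) * Complex.I) • 1).det = 0 ↔
      t * A.trace = 0 ∧ A.det = t ^ 2 := by
  rw [det_map_sub_smul_one, mul_pow, Complex.I_sq, Complex.ext_iff]
  simp only [Complex.add_re, Complex.sub_re, Complex.mul_re, Complex.neg_re, Complex.ofReal_re,
    Complex.ofReal_im, Complex.I_re, Complex.I_im, Complex.add_im, Complex.sub_im, Complex.mul_im,
    Complex.neg_im, Complex.zero_re, Complex.zero_im, Complex.one_re, Complex.one_im,
    ← Complex.ofReal_pow]
  constructor <;> rintro ⟨h₁, h₂⟩ <;> constructor <;> linarith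

lemma mem_Wset_iff (A : Matrix (Fin 2) (Fin 2) ℝ) : A ∈ Wset ↔ A.trace ≠ 0 ∨ A.det < 1 := by
  have hμ : ∀ μ : ℂ, μ.re = 0 → μ = (μ.im : ℂ) * Complex.I := fun μ hre =>
    Complex.ext (by simp [hre]) (by simp)
  have key : (∀ μ : ℂ, μ.re = 0 → 1 ≤ ‖μ‖ →
      (A.map (fun x : ℝ => (x : ℂ)) - μ • 1).det ≠ 0) ↔ A.trace ≠ 0 ∨ A.det < 1 := by
    rw [← not_le, ← not_and_or]
    constructor
    · rintro h ⟨htr, hdet⟩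
      refine h (√A.det * Complex.I) (by simp) ?_ ?_
      · simpa [abs_of_nonneg (Real.sqrt_nonneg _), Real.one_le_sqrt] using hdet
      · rw [det_map_sub_smul_one_eq_zero_iff, htr, Real.sq_sqrt (by linarith)]
        simp
    · rintro h μ hre hnorm hdet
      rw [hμ μ hre] at hnorm hdet
      rw [det_map_sub_smul_one_eq_zero_iff] at hdet
      have ht : 1 ≤ |μ.im| := by simpa using hnorm
      have ht₀ : μ.im ≠ 0 := by rintro h₀; norm_num [h₀] at ht
      exact h ⟨(mul_eq_zero.mp hdet.1).resolve_left ht₀,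
        hdet.2 ▸ one_le_sq_iff_one_le_abs _ |>.mpr ht⟩
  rw [← key]
  refine ⟨fun h => h.2.2, fun h => ⟨?_, ?_, h⟩⟩
  · simpa using h (-Complex.I) (by simp) (by simp)
  · exact h Complex.I (by simp) (by simp)

lemma isOpen_Wset : IsOpen Wset := by
  rw [show Wset = {A | A.trace ≠ 0 ∨ A.det < 1} from Set.ext mem_Wset_iff]
  exact (isOpen_ne_fun continuous_id.matrix_trace continuous_const).union
    (isOpen_lt continuous_id.matrix_det continuous_const)

lemma single_one_mem_realPlane (k : Fin 2) : EuclideanSpace.single k (1 : ℂ) ∈ realPlane := by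
  intro j
  by_cases h : j = k <;> simp [h]

lemma zero_mem_realPlane : (0 : EuclideanSpace ℂ (Fin 2)) ∈ realPlane := fun _ => rfl

lemma zero_mem_MA (A : Matrix (Fin 2) (Fin 2) ℝ) : (0 : EuclideanSpace ℂ (Fin 2)) ∈ MA A :=
  ⟨0, fun _ => by simp⟩

lemma column_add_I_smul_single_mem_MA (A : Matrix (Fin 2) (Fin 2) ℝ) (k : Fin 2) :
    (A 0 k • EuclideanSpace.single 0 (1 : ℂ) + A 1 k • EuclideanSpace.single 1 (1 : ℂ) +
      Complex.I • EuclideanSpace.single k (1 : ℂ)) ∈ MA A := by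
  refine ⟨Pi.single k 1, fun j => ?_⟩
  fin_cases j <;> fin_cases k <;> simp [Complex.real_smul]

lemma linearIndependent_single_one :
    LinearIndependent ℝ
      ![EuclideanSpace.single 0 (1 : ℂ), EuclideanSpace.single (1 : Fin 2) (1 : ℂ)] := by
  refine LinearIndependent.pair_iff.mpr fun s t h => ⟨?_, ?_⟩
  · simpa using congrArg (fun v : EuclideanSpace ℂ (Fin 2) => v 0) h
  · simpa using congrArg (fun v : EuclideanSpace ℂ (Fin 2) => v 1) h

lemma discrim_nonneg_of_isLagrangianSA {r : ℝ} (hr : 0 ≤ r) {A : Matrix (Fin 2) (Fin 2) ℝ}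
    {ω : EuclideanSpace ℂ (Fin 2) →
      (EuclideanSpace ℂ (Fin 2) →L[ℝ] EuclideanSpace ℂ (Fin 2) →L[ℝ] ℝ)}
    (hω : IsKahler ω) (hL : IsLagrangianSA r A ω) :
    0 ≤ (A 0 0 - A 1 1) ^ 2 + 4 * A 0 1 * A 1 0 := by
  obtain ⟨-, hanti, -, hJ, hpos⟩ := hω
  have h₀ : (0 : EuclideanSpace ℂ (Fin 2)) ∈ closedBall 0 r := mem_closedBall_self hr
  exact discrim_nonneg_of_isotropic_planes (B := (ω 0).toLinearMap₁₂) (hanti 0) (hJ 0) (hpos 0)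
    linearIndependent_single_one
    (hL.1 0 ⟨zero_mem_realPlane, h₀⟩ _ (single_one_mem_realPlane 0) _
      (single_one_mem_realPlane 1))
    (hL.2 0 ⟨zero_mem_MA A, h₀⟩ _ (column_add_I_smul_single_mem_MA A 0) _
      (column_add_I_smul_single_mem_MA A 1))

/-- **Proposition 3.** The set of `A ∈ 𝒲` such that `S(A)` is not Lagrangian with respect to
any Kähler form on `ℂ²` contains a nonempty open subset of the 2×2 real matrices; in fact
`{A ∈ 𝒲 : x ≠ w and x² + w² − 2xw + 2yz < 0}` is such a subset. -/
theorem nonempty_open_set_of_non_Lagrangian_matrices (r : ℝ) (hr : 0 < r) :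
    Set.Nonempty {A : Matrix (Fin 2) (Fin 2) ℝ | A ∈ Wset ∧ A 0 0 ≠ A 1 1 ∧
        (A 0 0)^2 + (A 1 1)^2 - 2 * A 0 0 * A 1 1 + 2 * A 0 1 * A 1 0 < 0} ∧
    IsOpen {A : Matrix (Fin 2) (Fin 2) ℝ | A ∈ Wset ∧ A 0 0 ≠ A 1 1 ∧
        (A 0 0)^2 + (A 1 1)^2 - 2 * A 0 0 * A 1 1 + 2 * A 0 1 * A 1 0 < 0} ∧
    ∀ A ∈ {A : Matrix (Fin 2) (Fin 2) ℝ | A ∈ Wset ∧ A 0 0 ≠ A 1 1 ∧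
        (A 0 0)^2 + (A 1 1)^2 - 2 * A 0 0 * A 1 1 + 2 * A 0 1 * A 1 0 < 0},
      ∀ ω : EuclideanSpace ℂ (Fin 2) → (EuclideanSpace ℂ (Fin 2) →L[ℝ] EuclideanSpace ℂ (Fin 2) →L[ℝ] ℝ),
        IsKahler ω → ¬ IsLagrangianSA r A ω := by
  refine ⟨⟨!![1, 1; -1, 0], ?_⟩, ?_, ?_⟩
  · simp [mem_Wset_iff, Matrix.trace_fin_two]
  · have hq : Continuous fun A : Matrix (Fin 2) (Fin 2) ℝ =>
        (A 0 0)^2 + (A 1 1)^2 - 2 * A 0 0 * A 1 1 + 2 * A 0 1 * A 1 0 := by fun_prop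
    exact isOpen_Wset.inter ((isOpen_ne_fun (by fun_prop) (by fun_prop)).inter
      (isOpen_lt hq continuous_const))
  · rintro A ⟨-, -, hq⟩ ω hω hL
    -- `(x - w)² + 2yz < 0` forces `yz < 0`, hence the discriminant `(x - w)² + 4yz` is negative
    nlinarith [discrim_nonneg_of_isLagrangianSA hr.le hω hL, sq_nonneg (A 0 0 - A 1 1)]
end
end

section
/- Let Ã = [[1,1],[−1,2]], let M(Ã) := {(Ã+iI)u : u ∈ ℝ²} ⊂ ℂ², and for r > 0 let S(Ã) := (ℝ² ∪ M(Ã)) ∩ closure(B(0,r)). Then S(Ã) is not Lagrangian with respect to any Kähler form on ℂ²: for every Kähler form ω on ℂ² there exist a point p ∈ S(Ã) and tangent vectors u, v to S(Ã) at p with ω_p(u,v) ≠ 0. -/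
set_option linter.unusedVariables false


open Complex Metric Set MvPolynomial
open scoped Manifold

noncomputable section

/-!
At the origin, `g(a, b) := ω₀(a, i b)` is an inner product on `ℝ²`. If both `ℝ²` and
`M(Ã) = {Ãu + iu}` are Lagrangian, then `ω₀(Ãu + iu, Ãv + iv) = g(Ãu, v) - g(Ãv, u)` vanishes,
i.e. `Ã` is `g`-self-adjoint, which is impossible since `Ã` has no real eigenvalue
(`λ² - 3λ + 3` has discriminant `-3`). Concretely, with `x = g(e₁, e₁)`, `y = g(e₂, e₂)`,
`s = g(e₁, e₂)`, the condition for `u = e₁, v = e₂` reads `x + y + s = 0`, whence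
`g(e₁ + e₂, e₁ + e₂) = x + y + 2s = s = -(x + y) < 0`.
-/

namespace ContinuousLinearMap

variable {E : Type*} [NormedAddCommGroup E] [NormedSpace ℂ E] {ω : E →L[ℝ] E →L[ℝ] ℝ}

theorem apply_I_smul_comm (hanti : ∀ u v, ω u v = -ω v u)
    (hJ : ∀ u v, ω (I • u) (I • v) = ω u v) (a b : E) :
    ω b (I • a) = ω a (I • b) := by
  have hII : I • I • a = -a := by rw [smul_smul, I_mul_I, neg_one_smul]
  rw [← hJ, hII, map_neg, hanti, neg_neg]

theorem apply_add_I_smul (hanti : ∀ u v, ω u v = -ω v u)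
    (hJ : ∀ u v, ω (I • u) (I • v) = ω u v) (a b c d : E) :
    ω (a + I • b) (c + I • d) = ω a c + ω b d + ω a (I • d) - ω c (I • b) := by
  have hIb : ω (I • b) c = -ω c (I • b) := hanti _ _
  simp only [map_add, add_apply, hIb, hJ]
  ring

/-- The vectors `(e₁ - e₂) + i e₁` and `(e₁ + 2e₂) + i e₂` are `(Ã + iI)e₁` and `(Ã + iI)e₂`. -/
theorem apply_ne_zero_of_isotropic (hanti : ∀ u v, ω u v = -ω v u)
    (hJ : ∀ u v, ω (I • u) (I • v) = ω u v) (hpos : ∀ w, w ≠ 0 → 0 < ω w (I • w))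
    {e₁ e₂ : E} (h₁ : e₁ ≠ 0) (h₂ : e₂ ≠ 0) (h₁₂ : e₁ + e₂ ≠ 0) (hiso : ω e₁ e₂ = 0) :
    ω ((e₁ - e₂) + I • e₁) ((e₁ + (2 : ℝ) • e₂) + I • e₂) ≠ 0 := by
  have hx := hpos e₁ h₁
  have hy := hpos e₂ h₂
  have hxy := hpos _ h₁₂
  have hs := apply_I_smul_comm hanti hJ e₁ e₂
  have h₂₁ : ω e₂ e₁ = 0 := by rw [hanti, hiso, neg_zero]
  have hdiag : ∀ u, ω u u = 0 := fun u => by linarith [hanti u u]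
  rw [apply_add_I_smul hanti hJ]
  simp only [smul_add, map_add, map_sub, map_smul, add_apply, sub_apply, smul_apply,
    smul_eq_mul, hdiag, hiso, h₂₁] at hxy ⊢
  linarith

end ContinuousLinearMap

/-- For `Ã = [[1,1],[−1,2]]`, the surface `S(Ã)` is not Lagrangian with respect to any Kähler
form on `ℂ²`: every Kähler form is nonzero on some pair of tangent vectors to `S(Ã)`. -/
theorem SAtilde_not_Lagrangian (r : ℝ) (hr : 0 < r)
    (ω : EuclideanSpace ℂ (Fin 2) → (EuclideanSpace ℂ (Fin 2) →L[ℝ] EuclideanSpace ℂ (Fin 2) →L[ℝ] ℝ)) (hω : IsKahler ω) :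
    ∃ (p u v : EuclideanSpace ℂ (Fin 2)),
      ((p ∈ realPlane ∩ Metric.closedBall 0 r ∧ u ∈ realPlane ∧ v ∈ realPlane) ∨
       (p ∈ MA !![(1:ℝ), 1; -1, 2] ∩ Metric.closedBall 0 r ∧
        u ∈ MA !![(1:ℝ), 1; -1, 2] ∧ v ∈ MA !![(1:ℝ), 1; -1, 2])) ∧
      ω p u v ≠ 0 := by
  obtain ⟨-, hanti, -, hJ, hpos⟩ := hω
  set e₁ : EuclideanSpace ℂ (Fin 2) := !₂[1, 0]
  set e₂ : EuclideanSpace ℂ (Fin 2) := !₂[0, 1]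
  have h0 : (0 : EuclideanSpace ℂ (Fin 2)) ∈ closedBall 0 r := mem_closedBall_self hr.le
  by_cases hiso : ω 0 e₁ e₂ = 0
  · have h₁ : e₁ ≠ 0 := fun h => by simpa [e₁] using congrArg (· 0) h
    have h₂ : e₂ ≠ 0 := fun h => by simpa [e₂] using congrArg (· 1) h
    have h₁₂ : e₁ + e₂ ≠ 0 := fun h => by simpa [e₁, e₂] using congrArg (· 0) h
    have hM₀ : (0 : EuclideanSpace ℂ (Fin 2)) ∈ MA !![(1:ℝ), 1; -1, 2] := ⟨0, fun j => by simp⟩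
    have hM₁ : (e₁ - e₂) + I • e₁ ∈ MA !![(1:ℝ), 1; -1, 2] :=
      ⟨![1, 0], fun j => by fin_cases j <;> simp [e₁, e₂]⟩
    have hM₂ : (e₁ + (2 : ℝ) • e₂) + I • e₂ ∈ MA !![(1:ℝ), 1; -1, 2] :=
      ⟨![0, 1], fun j => by fin_cases j <;> simp [e₁, e₂]⟩
    exact ⟨0, _, _, Or.inr ⟨⟨hM₀, h0⟩, hM₁, hM₂⟩,
      (ω 0).apply_ne_zero_of_isotropic (hanti 0) (hJ 0) (hpos 0) h₁ h₂ h₁₂ hiso⟩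
  · refine ⟨0, e₁, e₂, Or.inl ⟨⟨fun j => ?_, h0⟩, fun j => ?_, fun j => ?_⟩, hiso⟩ <;>
      fin_cases j <;> simp [e₁, e₂]
end
end
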